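/- arXiv:1711.05152 — 3 statements merged into one kernel-verified Lean document; each statement's English description precedes it below -/
import Mathlib

section
/- Let g: T^n → ℂ be a nonzero trigonometric polynomial with Fourier coefficients ĝ_h, h ∈ Ĩ, and let δ > 0 satisfy max_{h ∈ Ĩ} |ĝ_h| > δ. If X is uniformly distributed on T^n, then P(|g(X)| < δ) ≤ 1 - (max_{h ∈ Ĩ}|ĝ_h| - δ)/(Σ_{h ∈ Ĩ}|ĝ_h|) =: q < 1. -/
open MeasureTheory

/-!
Let `k` be a frequency where `|ĝ_k|` is maximal. Orthogonality of the characters on the unit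
cube gives `ĝ_k = ∫ g · e_{-k}`, so `|ĝ_k| ≤ E|g(X)|`. On the other hand `|g| ≤ Σ_h |ĝ_h| =: S`
everywhere, so `E|g(X)| ≤ δ + S · P(|g(X)| ≥ δ)`; comparing the two bounds gives the claim.
-/

theorem integral_Ico_exp_two_pi_int_mul (k : ℤ) :
    ∫ x in Set.Ico (0 : ℝ) 1, Complex.exp (2 * Real.pi * Complex.I * k * x) =
      if k = 0 then 1 else 0 := by
  split_ifs with hk
  · simp [hk]
  have hc : 2 * (Real.pi : ℂ) * Complex.I * k ≠ 0 := by
    simp [Real.pi_ne_zero, Complex.I_ne_zero, hk]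
  have hperiod : Complex.exp (2 * Real.pi * Complex.I * k) = 1 := by
    rw [← Complex.exp_int_mul_two_pi_mul_I k]
    ring_nf
  rw [setIntegral_congr_set Ico_ae_eq_Ioc, ← intervalIntegral.integral_of_le zero_le_one,
    integral_exp_mul_complex hc]
  simp [hperiod]

instance isProbabilityMeasure_restrict_Ico_zero_one :
    IsProbabilityMeasure (volume.restrict (Set.Ico (0 : ℝ) 1)) :=
  ⟨by simp [Real.volume_Ico]⟩

theorem volume_restrict_unitCube {ι : Type*} [Fintype ι] :
    volume.restrict (Set.univ.pi fun _ : ι => Set.Ico (0 : ℝ) 1) =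
      Measure.pi fun _ => volume.restrict (Set.Ico (0 : ℝ) 1) := by
  rw [volume_pi, Measure.restrict_pi_pi]

instance isProbabilityMeasure_restrict_unitCube {ι : Type*} [Fintype ι] :
    IsProbabilityMeasure (volume.restrict (Set.univ.pi fun _ : ι => Set.Ico (0 : ℝ) 1)) := by
  rw [volume_restrict_unitCube]
  infer_instance

section torusChar

variable {ι : Type*} [Fintype ι]

noncomputable def torusChar (h : ι → ℤ) (x : ι → ℝ) : ℂ :=
  Complex.exp (2 * Real.pi * Complex.I * ((∑ j, (h j : ℝ) * x j : ℝ) : ℂ))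

theorem torusChar_eq_prod (h : ι → ℤ) (x : ι → ℝ) :
    torusChar h x = ∏ j, Complex.exp (2 * Real.pi * Complex.I * (h j) * (x j)) := by
  rw [torusChar, ← Complex.exp_sum]
  push_cast
  rw [Finset.mul_sum]
  simp only [mul_assoc]

theorem torusChar_add (h k : ι → ℤ) (x : ι → ℝ) :
    torusChar (h + k) x = torusChar h x * torusChar k x := by
  simp only [torusChar_eq_prod, ← Finset.prod_mul_distrib, ← Complex.exp_add, Pi.add_apply]
  push_cast
  simp only [mul_add, add_mul]

@[simp]
theorem norm_torusChar (h : ι → ℤ) (x : ι → ℝ) : ‖torusChar h x‖ = 1 := by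
  rw [torusChar, ← Complex.norm_exp_ofReal_mul_I (2 * Real.pi * ∑ j, (h j : ℝ) * x j)]
  push_cast
  ring_nf

@[fun_prop]
theorem continuous_torusChar (h : ι → ℤ) : Continuous (torusChar h) := by
  unfold torusChar
  fun_prop

theorem integrable_torusChar (μ : Measure (ι → ℝ)) [IsFiniteMeasure μ] (h : ι → ℤ) :
    Integrable (torusChar h) μ :=
  .of_bound (continuous_torusChar h).aestronglyMeasurable 1
    (ae_of_all _ fun x => (norm_torusChar h x).le)

theorem integral_unitCube_torusChar (h : ι → ℤ) :
    ∫ x in Set.univ.pi fun _ => Set.Ico (0 : ℝ) 1, torusChar h x = if h = 0 then 1 else 0 := by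
  simp_rw [torusChar_eq_prod, volume_restrict_unitCube]
  rw [integral_fintype_prod_eq_prod
    (fun j (x : ℝ) => Complex.exp (2 * Real.pi * Complex.I * (h j) * x))]
  simp_rw [integral_Ico_exp_two_pi_int_mul]
  by_cases hh : h = 0
  · simp [hh]
  · obtain ⟨j, hj⟩ := Function.ne_iff.mp hh
    rw [if_neg hh]
    exact Finset.prod_eq_zero (Finset.mem_univ j) (if_neg hj)

theorem norm_sum_mul_torusChar_le (s : Finset (ι → ℤ)) (c : (ι → ℤ) → ℂ) (x : ι → ℝ) :
    ‖∑ h ∈ s, c h * torusChar h x‖ ≤ ∑ h ∈ s, ‖c h‖ :=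
  (norm_sum_le _ _).trans_eq (by simp)

theorem integral_unitCube_sum_mul_torusChar_mul_neg (s : Finset (ι → ℤ)) (c : (ι → ℤ) → ℂ)
    {k : ι → ℤ} (hk : k ∈ s) :
    ∫ x in Set.univ.pi fun _ => Set.Ico (0 : ℝ) 1,
      (∑ h ∈ s, c h * torusChar h x) * torusChar (-k) x = c k := by
  have hshift (h : ι → ℤ) (x : ι → ℝ) :
      c h * torusChar h x * torusChar (-k) x = c h * torusChar (h - k) x := by
    rw [sub_eq_add_neg, torusChar_add, mul_assoc]
  simp_rw [Finset.sum_mul, hshift]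
  rw [integral_finsetSum _ fun h _ => (integrable_torusChar _ (h - k)).const_mul (c h)]
  simp [integral_const_mul, integral_unitCube_torusChar, sub_eq_zero, hk]

theorem norm_coeff_le_integral_norm_sum_mul_torusChar (s : Finset (ι → ℤ))
    (c : (ι → ℤ) → ℂ) {k : ι → ℤ} (hk : k ∈ s) :
    ‖c k‖ ≤ ∫ x in Set.univ.pi fun _ => Set.Ico (0 : ℝ) 1, ‖∑ h ∈ s, c h * torusChar h x‖ := by
  rw [← integral_unitCube_sum_mul_torusChar_mul_neg s c hk]
  refine (norm_integral_le_integral_norm _).trans_eq ?_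
  simp

end torusChar

section

variable {α : Type*} [MeasurableSpace α] {μ : Measure α} [IsProbabilityMeasure μ]
  {f : α → ℝ} {δ S : ℝ}

theorem integral_sub_le_mul_measureReal_le (hf : Measurable f) (hf0 : ∀ x, 0 ≤ f x)
    (hfS : ∀ x, f x ≤ S) (hδ : 0 ≤ δ) :
    ∫ x, f x ∂μ - δ ≤ S * μ.real {x | δ ≤ f x} := by
  have hmeas : MeasurableSet {x | δ ≤ f x} := measurableSet_le measurable_const hf
  have hle : ∀ x, f x ≤ δ + {x | δ ≤ f x}.indicator (fun _ => S) x := by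
    intro x
    by_cases hx : δ ≤ f x
    · simp only [Set.indicator_of_mem (show x ∈ {x | δ ≤ f x} from hx)]
      linarith [hfS x]
    · simp only [Set.indicator_of_notMem (show x ∉ {x | δ ≤ f x} from hx)]
      linarith
  have hind : Integrable ({x | δ ≤ f x}.indicator fun _ => S) μ :=
    (integrable_const S).indicator hmeas
  have hint : ∫ x, f x ∂μ ≤ δ + μ.real {x | δ ≤ f x} * S := calc
    ∫ x, f x ∂μ ≤ ∫ x, (δ + {x | δ ≤ f x}.indicator (fun _ => S) x) ∂μ :=
      integral_mono_of_nonneg (.of_forall hf0) ((integrable_const δ).add hind) (.of_forall hle)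
    _ = δ + μ.real {x | δ ≤ f x} * S := by
      rw [integral_add (integrable_const δ) hind, integral_indicator_const _ hmeas]
      simp
  linarith

theorem measureReal_lt_le_one_sub {m : ℝ} (hf : Measurable f) (hf0 : ∀ x, 0 ≤ f x)
    (hfS : ∀ x, f x ≤ S) (hδ : 0 ≤ δ) (hS : 0 < S) (hm : m ≤ ∫ x, f x ∂μ) :
    μ.real {x | f x < δ} ≤ 1 - (m - δ) / S := by
  have hcompl : {x | f x < δ} = {x | δ ≤ f x}ᶜ := by ext; simp
  rw [hcompl, measureReal_compl (μ := μ) (measurableSet_le measurable_const hf), probReal_univ,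
    sub_le_sub_iff_left, div_le_iff₀ hS]
  linarith [integral_sub_le_mul_measureReal_le (μ := μ) hf hf0 hfS hδ]

end

theorem stmt1_general {n : ℕ} (It : Finset (Fin n → ℤ)) (hne : It.Nonempty)
    (ghat : (Fin n → ℤ) → ℂ)
    (g : (Fin n → ℝ) → ℂ)
    (hg : g = fun x => ∑ h ∈ It, ghat h *
      Complex.exp (2 * Real.pi * Complex.I * ((∑ j, (h j : ℝ) * x j : ℝ) : ℂ)))
    (μ : Measure (Fin n → ℝ))
    (hμ : μ = volume.restrict (Set.univ.pi fun _ => Set.Ico (0:ℝ) 1))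
    (δ : ℝ) (hδ : 0 < δ)
    (hδmax : δ < It.sup' hne fun h => ‖ghat h‖)
    (q : ℝ)
    (hq : q = 1 - ((It.sup' hne fun h => ‖ghat h‖) - δ) /
      (∑ h ∈ It, ‖ghat h‖)) :
    μ {x | ‖g x‖ < δ} ≤ ENNReal.ofReal q ∧ q < 1 := by
  obtain ⟨k, hk, hMk⟩ := It.exists_mem_eq_sup' hne fun h => ‖ghat h‖
  set M := It.sup' hne fun h => ‖ghat h‖
  set S := ∑ h ∈ It, ‖ghat h‖
  have hMS : M ≤ S := It.sup'_le hne _ fun h hh => It.single_le_sum (fun i _ => norm_nonneg _) hh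
  have hS : 0 < S := by linarith
  replace hg : g = fun x => ∑ h ∈ It, ghat h * torusChar h x := hg
  subst hg hμ
  have hM : M ≤ ∫ x in Set.univ.pi fun _ => Set.Ico (0:ℝ) 1, ‖∑ h ∈ It, ghat h * torusChar h x‖ :=
    hMk.symm ▸ norm_coeff_le_integral_norm_sum_mul_torusChar It ghat hk
  have hA := measureReal_lt_le_one_sub (by fun_prop) (fun _ => norm_nonneg _)
    (norm_sum_mul_torusChar_le It ghat) hδ.le hS hM
  refine ⟨?_, ?_⟩
  · rw [← ofReal_measureReal]
    exact ENNReal.ofReal_le_ofReal (hq ▸ hA)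
  · have := div_pos (sub_pos.2 hδmax) hS
    linarith

/-- For a nonzero trigonometric polynomial `g` on `T^n` with coefficients
`ghat h`, `h ∈ It`, and `δ > 0` with `max_{h} |ghat h| > δ`, a uniformly distributed `X`
satisfies `P(|g(X)| < δ) ≤ 1 - (max_h |ghat h| - δ)/(∑_h |ghat h|) =: q < 1`. -/
theorem stmt1 {n : ℕ} (It : Finset (Fin n → ℤ)) (hne : It.Nonempty)
    (ghat : (Fin n → ℤ) → ℂ)
    (g : (Fin n → ℝ) → ℂ)
    (hg : g = fun x => ∑ h ∈ It, ghat h *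
      Complex.exp (2 * Real.pi * Complex.I * ((∑ j, (h j : ℝ) * x j : ℝ) : ℂ)))
    (hg0 : g ≠ 0)
    (μ : Measure (Fin n → ℝ))
    (hμ : μ = volume.restrict (Set.univ.pi fun _ => Set.Ico (0:ℝ) 1))
    (δ : ℝ) (hδ : 0 < δ)
    (hδmax : δ < It.sup' hne fun h => ‖ghat h‖)
    (q : ℝ)
    (hq : q = 1 - ((It.sup' hne fun h => ‖ghat h‖) - δ) /
      (∑ h ∈ It, ‖ghat h‖)) :
    μ {x | ‖g x‖ < δ} ≤ ENNReal.ofReal q ∧ q < 1 :=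
  stmt1_general It hne ghat g hg μ hμ δ hδ hδmax q hq
end

section
/- Let p be a d-variate trigonometric polynomial with finite support S ⊂ ℤ^d, let 1 ≤ t ≤ d, z ∈ ℤ^t, M ∈ ℕ, and k ∈ ℤ^t. If k satisfies the single-frequency non-aliasing condition k·z ≢ k'·z (mod M) for all k' ∈ P_{(1,…,t)}(S) with k' ≠ k, then for every x̃ ∈ T^{d−t}: (1/M) Σ_{j=0}^{M−1} p((j/M)z, x̃) e^{−2πi k·z j/M} = Σ_{h ∈ S, (h_1,…,h_t)=k} p̂_h e^{2πi (h_{t+1},…,h_d)·x̃}. -/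
lemma sumexp14 (M : ℕ) (hM : 0 < M) (a : ℤ) :
    ∑ j ∈ Finset.range M,
        Complex.exp (2 * Real.pi * Complex.I * ((a : ℂ) * j / M)) =
      if (M : ℤ) ∣ a then (M : ℂ) else 0 := by
  have hMC : (M : ℂ) ≠ 0 := Nat.cast_ne_zero.mpr hM.ne'
  have h2πI : (2 * (Real.pi : ℂ) * Complex.I) ≠ 0 := by
    simp [Real.pi_ne_zero, Complex.I_ne_zero]
  have hω : ∀ j ∈ Finset.range M,
      Complex.exp (2 * Real.pi * Complex.I * ((a : ℂ) * j / M)) =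
        (Complex.exp (2 * Real.pi * Complex.I * ((a : ℂ) / M))) ^ j := by
    intro j _
    rw [← Complex.exp_nat_mul]
    ring_nf
  rw [Finset.sum_congr rfl hω]
  by_cases hd : (M : ℤ) ∣ a
  · have h1 : Complex.exp (2 * Real.pi * Complex.I * ((a : ℂ) / M)) = 1 := by
      obtain ⟨c, hc⟩ := hd
      have hca : (a : ℂ) = (M : ℂ) * (c : ℂ) := by exact_mod_cast congrArg (Int.cast : ℤ → ℂ) hc
      have harg : 2 * (Real.pi : ℂ) * Complex.I * ((a : ℂ) / M)
          = (c : ℤ) * (2 * Real.pi * Complex.I) := by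
        rw [hca]; field_simp
      rw [harg, Complex.exp_int_mul_two_pi_mul_I]
    simp [h1, hd]
  · have hne : Complex.exp (2 * Real.pi * Complex.I * ((a : ℂ) / M)) ≠ 1 := by
      intro hone
      rw [Complex.exp_eq_one_iff] at hone
      obtain ⟨n, hn⟩ := hone
      apply hd
      refine ⟨n, ?_⟩
      have h3 : (a : ℂ) / M = n := mul_left_cancel₀ h2πI (hn.trans (mul_comm _ _))
      have h4 : (a : ℂ) = M * n := by rw [(div_eq_iff hMC).mp h3]; ring
      exact_mod_cast h4
    rw [geom_sum_eq hne]
    have hpow : (Complex.exp (2 * Real.pi * Complex.I * ((a : ℂ) / M))) ^ M = 1 := by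
      rw [← Complex.exp_nat_mul]
      have : (M : ℂ) * (2 * Real.pi * Complex.I * ((a : ℂ) / M))
          = (a : ℤ) * (2 * Real.pi * Complex.I) := by
        field_simp
      rw [this, Complex.exp_int_mul_two_pi_mul_I]
    rw [hpow]
    simp [hd]

/-- If `k ∈ ℤ^t` satisfies the single-frequency non-aliasing condition
`k·z ≢ k'·z (mod M)` for all `k' ≠ k` in the projection of `S` to the first `t`
components, then the rank-1 lattice DFT recovers exactly the projected Fourier
coefficient: `(1/M) ∑_{j=0}^{M−1} p((j/M)z, x̃) e^{−2πi k·z j/M}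
  = ∑_{h ∈ S, (h_1,…,h_t)=k} p̂_h e^{2πi (h_{t+1},…,h_d)·x̃}`. -/
theorem stmt14 {t u : ℕ} (S : Finset ((Fin t → ℤ) × (Fin u → ℤ)))
    (phat : (Fin t → ℤ) × (Fin u → ℤ) → ℂ)
    (p : (Fin t → ℝ) → (Fin u → ℝ) → ℂ)
    (hp : p = fun x y => ∑ h ∈ S, phat h *
      Complex.exp (2 * Real.pi * Complex.I *
        (((∑ i, (h.1 i : ℝ) * x i) + ∑ i, (h.2 i : ℝ) * y i : ℝ) : ℂ)))
    (z : Fin t → ℤ) (M : ℕ) (hM : 0 < M) (k : Fin t → ℤ)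
    (hnoalias : ∀ h ∈ S, h.1 ≠ k →
      ¬ Int.ModEq (M : ℤ) (∑ i, k i * z i) (∑ i, h.1 i * z i)) :
    ∀ xt : Fin u → ℝ,
      (1 / (M : ℂ)) * ∑ j ∈ Finset.range M,
          p (fun i => (j : ℝ) / (M : ℝ) * (z i : ℝ)) xt *
            Complex.exp (-(2 * Real.pi * Complex.I) *
              ((((∑ i, k i * z i : ℤ) : ℝ) * (j : ℝ) / (M : ℝ) : ℝ) : ℂ))
        = ∑ h ∈ S.filter (fun h => h.1 = k),
            phat h * Complex.exp (2 * Real.pi * Complex.I *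
              ((∑ i, (h.2 i : ℝ) * xt i : ℝ) : ℂ)) := by
  intro xt
  subst hp
  have hMC : (M : ℂ) ≠ 0 := Nat.cast_ne_zero.mpr hM.ne'
  have hMR : (M : ℝ) ≠ 0 := Nat.cast_ne_zero.mpr hM.ne'
  have key : ∀ j ∈ Finset.range M,
      (∑ h ∈ S, phat h * Complex.exp (2 * Real.pi * Complex.I *
        (((∑ i, (h.1 i : ℝ) * ((j : ℝ) / (M : ℝ) * (z i : ℝ))) + ∑ i, (h.2 i : ℝ) * xt i : ℝ) : ℂ))) *
        Complex.exp (-(2 * Real.pi * Complex.I) *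
          ((((∑ i, k i * z i : ℤ) : ℝ) * (j : ℝ) / (M : ℝ) : ℝ) : ℂ))
      = ∑ h ∈ S, (phat h * Complex.exp (2 * Real.pi * Complex.I *
          ((∑ i, (h.2 i : ℝ) * xt i : ℝ) : ℂ))) *
          Complex.exp (2 * Real.pi * Complex.I *
            ((((∑ i, h.1 i * z i) - (∑ i, k i * z i) : ℤ) : ℂ) * j / M)) := by
    intro j _
    rw [Finset.sum_mul]
    refine Finset.sum_congr rfl fun h _ => ?_
    have h1 : (∑ i, (h.1 i : ℝ) * ((j : ℝ) / (M : ℝ) * (z i : ℝ)))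
        = ((∑ i, h.1 i * z i : ℤ) : ℝ) * j / M := by
      push_cast
      rw [Finset.sum_mul, Finset.sum_div]
      refine Finset.sum_congr rfl fun i _ => ?_
      ring
    have hE : 2 * (Real.pi : ℂ) * Complex.I *
        (((∑ i, (h.1 i : ℝ) * ((j : ℝ) / (M : ℝ) * (z i : ℝ))) + ∑ i, (h.2 i : ℝ) * xt i : ℝ) : ℂ)
        + (-(2 * Real.pi * Complex.I) *
          ((((∑ i, k i * z i : ℤ) : ℝ) * (j : ℝ) / (M : ℝ) : ℝ) : ℂ))
        = 2 * (Real.pi : ℂ) * Complex.I * ((∑ i, (h.2 i : ℝ) * xt i : ℝ) : ℂ)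
          + 2 * (Real.pi : ℂ) * Complex.I *
            ((((∑ i, h.1 i * z i) - (∑ i, k i * z i) : ℤ) : ℂ) * j / M) := by
      rw [h1]
      push_cast
      field_simp
      ring
    rw [mul_assoc, ← Complex.exp_add, hE, Complex.exp_add, ← mul_assoc]
  rw [Finset.sum_congr rfl key, Finset.sum_comm]
  have step : ∀ h ∈ S,
      ∑ j ∈ Finset.range M, (phat h * Complex.exp (2 * Real.pi * Complex.I *
          ((∑ i, (h.2 i : ℝ) * xt i : ℝ) : ℂ))) *
          Complex.exp (2 * Real.pi * Complex.I *
            ((((∑ i, h.1 i * z i) - (∑ i, k i * z i) : ℤ) : ℂ) * j / M))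
      = (phat h * Complex.exp (2 * Real.pi * Complex.I *
          ((∑ i, (h.2 i : ℝ) * xt i : ℝ) : ℂ))) *
          (if (M : ℤ) ∣ ((∑ i, h.1 i * z i) - (∑ i, k i * z i)) then (M : ℂ) else 0) := by
    intro h _
    rw [← Finset.mul_sum, sumexp14 M hM]
  rw [Finset.sum_congr rfl step, Finset.sum_filter, Finset.mul_sum]
  refine Finset.sum_congr rfl fun h hh => ?_
  by_cases hk : h.1 = k
  · have hdvd : (M : ℤ) ∣ ((∑ i, h.1 i * z i) - (∑ i, k i * z i)) := by
      rw [hk]; simp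
    rw [if_pos hdvd, if_pos hk]
    field_simp
  · have hnd : ¬ (M : ℤ) ∣ ((∑ i, h.1 i * z i) - (∑ i, k i * z i)) := fun hdd =>
      hnoalias h hh hk (Int.modEq_iff_dvd.mpr hdd)
    rw [if_neg hnd, if_neg hk]
    simp
end

section
/- Let I ⊂ ℤ^d be finite and let Λ = Λ(z_1,M_1,…,z_L,M_L) be a multiple rank-1 lattice satisfying: for each ℓ there is I_ℓ ⊆ I with k·z_ℓ ≢ k'·z_ℓ (mod M_ℓ) for all k ∈ I_ℓ, k' ∈ I, k ≠ k', and ∪_ℓ I_ℓ = I. Then any trigonometric polynomial p with support contained in I is uniquely determined by its values on Λ; i.e., if p and q are trigonometric polynomials supported on I agreeing on all nodes of Λ, then p = q. -/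
/-!
Sampling a trigonometric polynomial with frequencies in `I` along the rank-1 lattice
`{j z / M : j < M}` turns the frequency `k` into the residue `k ⬝ᵥ z mod M`, and the
one-dimensional DFT of the samples at the residue of `k₀` sums the coefficients of all
frequencies aliasing with `k₀`. Under the non-aliasing condition this sum is `M * p̂ k₀`
alone, so every coefficient indexed by `I_ℓ` is determined by the samples on the `ℓ`-th
lattice, and the sets `I_ℓ` cover `I`.
-/

open Finset Real
open scoped Matrix

theorem Complex.sum_range_exp_two_pi_I_mul_div {m : ℕ} (hm : m ≠ 0) (a : ℤ) :
    ∑ j ∈ range m, Complex.exp (2 * π * Complex.I * (j * a / m)) =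
      if (m : ℤ) ∣ a then (m : ℂ) else 0 := by
  set ζ := Complex.exp (2 * π * Complex.I / m)
  have hζ : IsPrimitiveRoot ζ m := Complex.isPrimitiveRoot_exp m hm
  have hpow (j : ℕ) : Complex.exp (2 * π * Complex.I * (j * a / m)) = (ζ ^ a) ^ j := by
    rw [← Complex.exp_int_mul, ← Complex.exp_nat_mul]
    ring_nf
  simp only [hpow]
  split_ifs with hd
  · simp [(hζ.zpow_eq_one_iff_dvd a).mpr hd]
  · have hω : ζ ^ a ≠ 1 := fun h => hd ((hζ.zpow_eq_one_iff_dvd a).mp h)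
    have hωm : (ζ ^ a) ^ m = 1 := by
      rw [← zpow_natCast, ← zpow_mul, mul_comm, zpow_mul, zpow_natCast, hζ.pow_eq_one, one_zpow]
    rw [geom_sum_eq hω, hωm, sub_self, zero_div]

section Rank1Lattice

variable {ι : Type*} [Fintype ι]

noncomputable def trigPoly (S : Finset (ι → ℤ)) (c : (ι → ℤ) → ℂ) (x : ι → ℝ) : ℂ :=
  ∑ k ∈ S, c k * Complex.exp (2 * π * Complex.I * ((∑ i, (k i : ℝ) * x i : ℝ) : ℂ))

noncomputable def rank1Node (z : ι → ℤ) (M j : ℕ) : ι → ℝ :=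
  fun i => (j : ℝ) * (z i : ℝ) / (M : ℝ)

theorem sum_mul_rank1Node (k z : ι → ℤ) (M j : ℕ) :
    ((∑ i, (k i : ℝ) * rank1Node z M j i : ℝ) : ℂ) = j * ((k ⬝ᵥ z : ℤ) : ℂ) / M := by
  simp only [rank1Node, dotProduct]
  push_cast
  rw [Finset.mul_sum, Finset.sum_div]
  exact Finset.sum_congr rfl fun i _ => by ring

theorem sum_trigPoly_rank1Node_mul_exp {S : Finset (ι → ℤ)} (c : (ι → ℤ) → ℂ) (z : ι → ℤ)
    {M : ℕ} (hM : M ≠ 0) {k₀ : ι → ℤ} (hk₀ : k₀ ∈ S)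
    (hnoalias : ∀ k ∈ S, k₀ ≠ k → ¬ (k₀ ⬝ᵥ z ≡ k ⬝ᵥ z [ZMOD M])) :
    ∑ j ∈ range M, trigPoly S c (rank1Node z M j) *
        Complex.exp (-(2 * π * Complex.I * (j * ((k₀ ⬝ᵥ z : ℤ) : ℂ) / M))) =
      M * c k₀ := by
  have hterm (j : ℕ) (k : ι → ℤ) :
      c k * Complex.exp (2 * π * Complex.I * ((∑ i, (k i : ℝ) * rank1Node z M j i : ℝ) : ℂ)) *
          Complex.exp (-(2 * π * Complex.I * (j * ((k₀ ⬝ᵥ z : ℤ) : ℂ) / M))) =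
        c k * Complex.exp (2 * π * Complex.I * (j * ((k ⬝ᵥ z - k₀ ⬝ᵥ z : ℤ) : ℂ) / M)) := by
    rw [sum_mul_rank1Node, mul_assoc, ← Complex.exp_add]
    push_cast
    ring_nf
  have hcollapse (k : ι → ℤ) (hk : k ∈ S) (hne : k ≠ k₀) :
      c k * (if (M : ℤ) ∣ k ⬝ᵥ z - k₀ ⬝ᵥ z then (M : ℂ) else 0) = 0 := by
    rw [if_neg ((Int.modEq_iff_dvd).not.mp (hnoalias k hk hne.symm)), mul_zero]
  calc _ = ∑ k ∈ S, c k * ∑ j ∈ range M,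
        Complex.exp (2 * π * Complex.I * (j * ((k ⬝ᵥ z - k₀ ⬝ᵥ z : ℤ) : ℂ) / M)) := by
        simp only [trigPoly, Finset.sum_mul, hterm, Finset.mul_sum]
        exact Finset.sum_comm
    _ = ∑ k ∈ S, c k * (if (M : ℤ) ∣ k ⬝ᵥ z - k₀ ⬝ᵥ z then (M : ℂ) else 0) := by
        simp only [Complex.sum_range_exp_two_pi_I_mul_div hM]
    _ = M * c k₀ := by
        rw [Finset.sum_eq_single_of_mem k₀ hk₀ hcollapse, sub_self, if_pos (dvd_zero _), mul_comm]

end Rank1Lattice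

theorem stmt17_general {d L : ℕ} (I : Finset (Fin d → ℤ))
    (z : Fin L → Fin d → ℤ) (M : Fin L → ℕ) (hM : ∀ ℓ, 0 < M ℓ)
    (Isub : Fin L → Finset (Fin d → ℤ))
    (hnoalias : ∀ ℓ, ∀ k ∈ Isub ℓ, ∀ k' ∈ I, k ≠ k' →
      ¬ Int.ModEq ((M ℓ : ℕ) : ℤ) (∑ i, k i * z ℓ i) (∑ i, k' i * z ℓ i))
    (hcover : ∀ k ∈ I, ∃ ℓ, k ∈ Isub ℓ)
    (phat qhat : (Fin d → ℤ) → ℂ)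
    (p q : (Fin d → ℝ) → ℂ)
    (hp : p = fun x => ∑ k ∈ I, phat k *
      Complex.exp (2 * Real.pi * Complex.I * ((∑ i, (k i : ℝ) * x i : ℝ) : ℂ)))
    (hq : q = fun x => ∑ k ∈ I, qhat k *
      Complex.exp (2 * Real.pi * Complex.I * ((∑ i, (k i : ℝ) * x i : ℝ) : ℂ)))
    (hagree : ∀ ℓ, ∀ j ∈ Finset.range (M ℓ),
      p (fun i => (j : ℝ) * (z ℓ i : ℝ) / (M ℓ : ℝ)) =
      q (fun i => (j : ℝ) * (z ℓ i : ℝ) / (M ℓ : ℝ))) :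
    p = q := by
  change p = trigPoly I phat at hp
  change q = trigPoly I qhat at hq
  subst hp hq
  have hcoeff : ∀ k ∈ I, phat k = qhat k := by
    intro k hk
    obtain ⟨ℓ, hkℓ⟩ := hcover k hk
    have hMℓ : M ℓ ≠ 0 := (hM ℓ).ne'
    refine mul_left_cancel₀ (Nat.cast_ne_zero.mpr hMℓ : (M ℓ : ℂ) ≠ 0) ?_
    rw [← sum_trigPoly_rank1Node_mul_exp phat (z ℓ) hMℓ hk (hnoalias ℓ k hkℓ),
      ← sum_trigPoly_rank1Node_mul_exp qhat (z ℓ) hMℓ hk (hnoalias ℓ k hkℓ)]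
    exact Finset.sum_congr rfl fun j hj => by unfold rank1Node; rw [hagree ℓ j hj]
  funext x
  exact Finset.sum_congr rfl fun k hk => by rw [hcoeff k hk]

/-- If the multiple rank-1 lattice `Λ(z_1,M_1,…,z_L,M_L)` satisfies the
reconstruction condition (2.2): for each `ℓ` there is `I_ℓ ⊆ I` such that
`k·z_ℓ ≢ k'·z_ℓ (mod M_ℓ)` for all `k ∈ I_ℓ`, `k' ∈ I`, `k ≠ k'`, and `∪_ℓ I_ℓ = I`,
then trigonometric polynomials supported on `I` are uniquely determined by their values
on the lattice nodes: if `p` and `q` agree on all nodes, then `p = q`. -/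
theorem stmt17 {d L : ℕ} (I : Finset (Fin d → ℤ))
    (z : Fin L → Fin d → ℤ) (M : Fin L → ℕ) (hM : ∀ ℓ, 0 < M ℓ)
    (Isub : Fin L → Finset (Fin d → ℤ))
    (hIsub : ∀ ℓ, Isub ℓ ⊆ I)
    (hnoalias : ∀ ℓ, ∀ k ∈ Isub ℓ, ∀ k' ∈ I, k ≠ k' →
      ¬ Int.ModEq ((M ℓ : ℕ) : ℤ) (∑ i, k i * z ℓ i) (∑ i, k' i * z ℓ i))
    (hcover : ∀ k ∈ I, ∃ ℓ, k ∈ Isub ℓ)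
    (phat qhat : (Fin d → ℤ) → ℂ)
    (p q : (Fin d → ℝ) → ℂ)
    (hp : p = fun x => ∑ k ∈ I, phat k *
      Complex.exp (2 * Real.pi * Complex.I * ((∑ i, (k i : ℝ) * x i : ℝ) : ℂ)))
    (hq : q = fun x => ∑ k ∈ I, qhat k *
      Complex.exp (2 * Real.pi * Complex.I * ((∑ i, (k i : ℝ) * x i : ℝ) : ℂ)))
    (hagree : ∀ ℓ, ∀ j ∈ Finset.range (M ℓ),
      p (fun i => (j : ℝ) * (z ℓ i : ℝ) / (M ℓ : ℝ)) =
      q (fun i => (j : ℝ) * (z ℓ i : ℝ) / (M ℓ : ℝ))) :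
    p = q :=
  stmt17_general I z M hM Isub hnoalias hcover phat qhat p q hp hq hagree
end
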